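/- arXiv:1803.06083 — 2 statements merged into one kernel-verified Lean document; each statement's English description precedes it below -/
import Mathlib

section
/- Let (G, ω₁) and (H, ω₂) be weighted locally compact groups, φ : G → H an isomorphism of topological groups with measure adjustment constant c (so λ₁(E) = c λ₂(φ(E))), and γ : G → ℂ* a continuous multiplicative character with 0 < inf_x |γ(x)| ω₂(φ(x))/ω₁(x) and sup_x |γ(x)| ω₂(φ(x))/ω₁(x) < ∞. Then the weighted composition operator T(f) = c · (γ ∘ φ⁻¹) · (f ∘ φ⁻¹) is a bounded bijective algebra homomorphism from the convolution algebra L^p(G, ω₁) onto L^p(H, ω₂), i.e., T(f ∗ g) = T(f) ∗ T(g). -/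
/-!
The measure hypothesis says `μ = c • (φ⁻¹)_* ν`, so every integral over `G` is `c` times the
integral over `H` of the integrand composed with `φ⁻¹`. With this change of variables the upper
bound `|γ| · ω₂ ∘ φ ≤ M ω₁` makes `T` bounded. The inverse `g ↦ c⁻¹ · γ⁻¹ · (g ∘ φ)` is again a
weighted composition operator, for `φ`, `c⁻¹` and `γ⁻¹ ∘ φ⁻¹`, and the lower bound
`m ω₁ ≤ |γ| · ω₂ ∘ φ` is exactly the upper bound it needs, with constant `1 / m`; so `T` is onto.
Finally `γ(φ⁻¹ s) γ(φ⁻¹ (s⁻¹ y)) = γ(φ⁻¹ y)` turns `T(f ∗ g)` into `T f ∗ T g` after the change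
of variables.
-/

open MeasureTheory ENNReal

/-- Membership in the weighted space `L^p(G, ω)`. -/
def MemWLp {G : Type*} [MeasurableSpace G] (μ : MeasureTheory.Measure G)
    (ω : G → ℝ) (p : ℝ) (f : G → ℂ) : Prop :=
  AEMeasurable f μ ∧
    ∫⁻ y, (‖f y‖₊ : ℝ≥0∞) ^ p * ENNReal.ofReal (ω y) ^ p ∂μ < ⊤

/-- Convolution `(f ∗ g)(y) = ∫ f(t) g(t⁻¹ y) dλ(t)`. -/
noncomputable def wConv {G : Type*} [Group G] [MeasurableSpace G]
    (μ : MeasureTheory.Measure G) (f g : G → ℂ) : G → ℂ :=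
  fun y => ∫ t, f t * g (t⁻¹ * y) ∂μ

/-- The weighted composition operator `T f = c · (γ ∘ ψ) · (f ∘ ψ)`
(with `ψ = φ⁻¹`). -/
def wCompOp {G H : Type*} (c : ℝ) (γ : G → ℂ) (ψ : H → G) (f : G → ℂ) :
    H → ℂ := fun y => (c : ℂ) * γ (ψ y) * f (ψ y)

/-- `‖f‖_{p,ω}^p`. -/
noncomputable def wLpNormPow {G : Type*} [MeasurableSpace G] (μ : Measure G) (ω : G → ℝ)
    (p : ℝ) (f : G → ℂ) : ℝ≥0∞ :=
  ∫⁻ y, (‖f y‖₊ : ℝ≥0∞) ^ p * ENNReal.ofReal (ω y) ^ p ∂μ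

section Transfer

variable {G H : Type*} [MeasurableSpace G] [MeasurableSpace H] {μ : Measure G} {ν : Measure H}
  {ψ : H ≃ᵐ G} {a : ℝ≥0∞}

theorem eq_smul_map_symm_of_measure_image (e : G ≃ᵐ H)
    (h : ∀ E : Set G, MeasurableSet E → μ E = a * ν (e '' E)) :
    μ = a • ν.map e.symm := by
  ext E hE
  rw [Measure.smul_apply, Measure.map_apply e.symm.measurable hE, h E hE,
    e.image_eq_preimage_symm, smul_eq_mul]

theorem eq_inv_smul_map_symm_of_eq_smul_map (hμ : μ = a • ν.map ψ) (ha : a ≠ 0)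
    (ha' : a ≠ ⊤) : ν = a⁻¹ • μ.map ψ.symm := by
  rw [hμ, Measure.map_smul, ψ.map_symm_map, smul_smul, ENNReal.inv_mul_cancel ha ha', one_smul]

theorem lintegral_eq_mul_lintegral_comp_of_eq_smul_map (hμ : μ = a • ν.map ψ)
    (F : G → ℝ≥0∞) : ∫⁻ x, F x ∂μ = a * ∫⁻ y, F (ψ y) ∂ν := by
  rw [hμ, lintegral_smul_measure, lintegral_map_equiv, smul_eq_mul]

theorem integral_eq_smul_integral_comp_of_eq_smul_map {E : Type*} [NormedAddCommGroup E]
    [NormedSpace ℝ E] {c : ℝ} (hc : 0 ≤ c) (hμ : μ = ENNReal.ofReal c • ν.map ψ) (F : G → E) :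
    ∫ x, F x ∂μ = c • ∫ y, F (ψ y) ∂ν := by
  rw [hμ, integral_smul_measure, integral_map_equiv, ENNReal.toReal_ofReal hc]

theorem AEMeasurable.comp_of_eq_smul_map {E : Type*} [MeasurableSpace E] {f : G → E}
    (hf : AEMeasurable f μ) (hμ : μ = a • ν.map ψ) (ha : a ≠ 0) :
    AEMeasurable (fun y => f (ψ y)) ν := by
  have hac : ν.map ψ ≪ μ := by
    rw [hμ]
    exact Measure.absolutelyContinuous_smul ha
  exact (hf.mono_ac hac).comp_aemeasurable ψ.measurable.aemeasurable

end Transfer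

section WeightedNorm

variable {G H : Type*} [MeasurableSpace G] [MeasurableSpace H] {p : ℝ}

theorem nnnorm_rpow_mul_ofReal_rpow (hp : 0 ≤ p) (z : ℂ) (w : ℝ) :
    (‖z‖₊ : ℝ≥0∞) ^ p * ENNReal.ofReal w ^ p = ENNReal.ofReal (‖z‖ * w) ^ p := by
  rw [ENNReal.ofReal_mul (norm_nonneg z), ofReal_norm, enorm_eq_nnnorm,
    ENNReal.mul_rpow_of_nonneg _ _ hp]

theorem wLpNormPow_le_of_le {ν : Measure H} {ω ω' : H → ℝ} {f g : H → ℂ} {K : ℝ}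
    (hp : 0 ≤ p) (hK : 0 ≤ K) (h : ∀ y, ‖g y‖ * ω y ≤ K * (‖f y‖ * ω' y)) :
    wLpNormPow ν ω p g ≤ ENNReal.ofReal K ^ p * wLpNormPow ν ω' p f := by
  rw [wLpNormPow, wLpNormPow, ← lintegral_const_mul' _ _ (by finiteness)]
  refine lintegral_mono fun y => ?_
  rw [nnnorm_rpow_mul_ofReal_rpow hp, nnnorm_rpow_mul_ofReal_rpow hp,
    ← ENNReal.mul_rpow_of_nonneg _ _ hp, ← ENNReal.ofReal_mul hK]
  exact ENNReal.rpow_le_rpow (ENNReal.ofReal_le_ofReal (h y)) hp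

theorem wLpNormPow_eq_mul_wLpNormPow_comp {μ : Measure G} {ν : Measure H} {ψ : H ≃ᵐ G}
    {a : ℝ≥0∞} (hμ : μ = a • ν.map ψ) (ω : G → ℝ) (f : G → ℂ) :
    wLpNormPow μ ω p f = a * wLpNormPow ν (fun y => ω (ψ y)) p (fun y => f (ψ y)) :=
  lintegral_eq_mul_lintegral_comp_of_eq_smul_map hμ _

end WeightedNorm

theorem inv_mul_le_inv_mul_of_le_mul_div {m r w v : ℝ} (hm : 0 < m) (hr : 0 < r) (hv : 0 < v)
    (h : m ≤ r * w / v) : r⁻¹ * v ≤ m⁻¹ * w := by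
  rw [le_div_iff₀ hv] at h
  rw [inv_mul_le_iff₀ hr, ← mul_assoc, mul_comm r m⁻¹, mul_assoc, le_inv_mul_iff₀ hm]
  exact h

section CompOp

variable {G H : Type*}

theorem norm_wCompOp (c : ℝ) (γ : G → ℂ) (ψ : H → G) (f : G → ℂ) (y : H) :
    ‖wCompOp c γ ψ f y‖ = |c| * ‖γ (ψ y)‖ * ‖f (ψ y)‖ := by
  simp only [wCompOp, norm_mul, Complex.norm_real, Real.norm_eq_abs]

theorem wCompOp_injective {c : ℝ} (hc : c ≠ 0) {γ : G → ℂ} (hγ : ∀ x, γ x ≠ 0) {ψ : H → G}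
    (hψ : Function.Surjective ψ) : Function.Injective (wCompOp c γ ψ) := by
  intro f₁ f₂ hT
  funext x
  obtain ⟨y, rfl⟩ := hψ x
  have hy := congrFun hT y
  simp only [wCompOp] at hy
  exact mul_left_cancel₀ (mul_ne_zero (by exact_mod_cast hc) (hγ _)) hy

theorem wCompOp_wCompOp_inv {c : ℝ} (hc : c ≠ 0) {γ : G → ℂ} (hγ : ∀ x, γ x ≠ 0)
    (e : H ≃ G) (g : H → ℂ) :
    wCompOp c γ e (wCompOp c⁻¹ (fun y => (γ (e y))⁻¹) e.symm g) = g := by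
  funext y
  have hc' : (c : ℂ) ≠ 0 := by exact_mod_cast hc
  simp only [wCompOp, Equiv.symm_apply_apply, Complex.ofReal_inv]
  field_simp [hγ (e y)]

theorem wCompOp_wConv [Group G] [Group H] [MeasurableSpace G] [MeasurableSpace H]
    {μ : Measure G} {ν : Measure H} {c : ℝ} {γ : G → ℂ}
    (hγ : ∀ a b, γ (a * b) = γ a * γ b) (ψ : H →* G)
    (h_integral : ∀ F : G → ℂ, ∫ x, F x ∂μ = c • ∫ y, F (ψ y) ∂ν) (f g : G → ℂ) :
    wCompOp c γ ψ (wConv μ f g) = wConv ν (wCompOp c γ ψ f) (wCompOp c γ ψ g) := by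
  funext y
  have hγ_split : ∀ s, γ (ψ s) * γ (ψ (s⁻¹ * y)) = γ (ψ y) := fun s => by
    rw [← hγ, ← map_mul, mul_inv_cancel_left]
  simp only [wCompOp, wConv, h_integral fun t => f t * g (t⁻¹ * ψ y), Complex.real_smul,
    ← integral_const_mul]
  congr 1
  funext s
  rw [← hγ_split s, map_mul, map_inv]
  ring

variable [MeasurableSpace G] [MeasurableSpace H] {μ : Measure G} {ν : Measure H}
  {ψ : H ≃ᵐ G} {ω₁ : G → ℝ} {ω₂ : H → ℝ} {p c M : ℝ} {γ : G → ℂ}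

theorem wLpNormPow_wCompOp_le (hc : 0 < c) (hμ : μ = ENNReal.ofReal c • ν.map ψ)
    (hp : 0 ≤ p) (hM : 0 ≤ M) (hγ : ∀ y, ‖γ (ψ y)‖ * ω₂ y ≤ M * ω₁ (ψ y)) (f : G → ℂ) :
    wLpNormPow ν ω₂ p (wCompOp c γ ψ f)
      ≤ ENNReal.ofReal ((c * M) ^ p / c) * wLpNormPow μ ω₁ p f := by
  have hpointwise : ∀ y, ‖wCompOp c γ ψ f y‖ * ω₂ y ≤ c * M * (‖f (ψ y)‖ * ω₁ (ψ y)) :=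
    fun y => by
      rw [norm_wCompOp, abs_of_pos hc]
      calc c * ‖γ (ψ y)‖ * ‖f (ψ y)‖ * ω₂ y = c * ‖f (ψ y)‖ * (‖γ (ψ y)‖ * ω₂ y) := by ring
        _ ≤ c * ‖f (ψ y)‖ * (M * ω₁ (ψ y)) :=
            mul_le_mul_of_nonneg_left (hγ y) (by positivity)
        _ = c * M * (‖f (ψ y)‖ * ω₁ (ψ y)) := by ring
  calc wLpNormPow ν ω₂ p (wCompOp c γ ψ f)
      ≤ ENNReal.ofReal (c * M) ^ p * wLpNormPow ν (fun y => ω₁ (ψ y)) p (fun y => f (ψ y)) :=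
        wLpNormPow_le_of_le hp (by positivity) hpointwise
    _ = ENNReal.ofReal (c * M) ^ p * (ENNReal.ofReal c)⁻¹ * wLpNormPow μ ω₁ p f := by
        rw [wLpNormPow_eq_mul_wLpNormPow_comp hμ, mul_assoc, ← mul_assoc (ENNReal.ofReal c)⁻¹,
          ENNReal.inv_mul_cancel (by simpa using hc) ENNReal.ofReal_ne_top, one_mul]
    _ = ENNReal.ofReal ((c * M) ^ p / c) * wLpNormPow μ ω₁ p f := by
        rw [ENNReal.ofReal_div_of_pos hc, ENNReal.ofReal_rpow_of_nonneg (by positivity) hp,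
          div_eq_mul_inv]

theorem MemWLp.wCompOp {f : G → ℂ} (hf : MemWLp μ ω₁ p f) (hc : 0 < c)
    (hμ : μ = ENNReal.ofReal c • ν.map ψ) (hp : 0 ≤ p) (hM : 0 ≤ M) (hγm : Measurable γ)
    (hγ : ∀ y, ‖γ (ψ y)‖ * ω₂ y ≤ M * ω₁ (ψ y)) : MemWLp ν ω₂ p (wCompOp c γ ψ f) :=
  ⟨(aemeasurable_const.mul (hγm.comp ψ.measurable).aemeasurable).mul
      (hf.1.comp_of_eq_smul_map hμ (by simpa using hc)),
    (wLpNormPow_wCompOp_le hc hμ hp hM hγ f).trans_lt (ENNReal.mul_lt_top ofReal_lt_top hf.2)⟩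

end CompOp

theorem stmt7_general {G H : Type*}
    [Group G] [TopologicalSpace G]
    [MeasurableSpace G] [BorelSpace G]
    [Group H] [TopologicalSpace H]
    [MeasurableSpace H] [BorelSpace H]
    (μ : Measure G) (ν : Measure H)
    (ω₁ : G → ℝ) (hω₁_pos : ∀ x, 0 < ω₁ x)
    (ω₂ : H → ℝ)
    (p : ℝ) (hp : 1 ≤ p)
    (φ : G ≃* H) (hφ : Continuous φ) (hφ_inv : Continuous φ.symm)
    (c : ℝ) (hc : 0 < c)
    (hmeas : ∀ E : Set G, MeasurableSet E → μ E = ENNReal.ofReal c * ν (φ '' E))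
    (γ : G → ℂ) (hγ_cont : Continuous γ) (hγ_ne : ∀ a, γ a ≠ 0)
    (hγ_hom : ∀ a b, γ (a * b) = γ a * γ b)
    (m M : ℝ) (hm : 0 < m)
    (hbound : ∀ a, m ≤ ‖γ a‖ * ω₂ (φ a) / ω₁ a ∧ ‖γ a‖ * ω₂ (φ a) / ω₁ a ≤ M) :
    (∀ f, MemWLp μ ω₁ p f → MemWLp ν ω₂ p (wCompOp c γ φ.symm f)) ∧
    (∃ C : ℝ, 0 < C ∧ ∀ f, MemWLp μ ω₁ p f →
      ∫⁻ y, (‖wCompOp c γ φ.symm f y‖₊ : ℝ≥0∞) ^ p *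
          ENNReal.ofReal (ω₂ y) ^ p ∂ν
        ≤ ENNReal.ofReal C *
          ∫⁻ x, (‖f x‖₊ : ℝ≥0∞) ^ p * ENNReal.ofReal (ω₁ x) ^ p ∂μ) ∧
    (∀ f₁ f₂ : G → ℂ, wCompOp c γ φ.symm f₁ = wCompOp c γ φ.symm f₂ → f₁ = f₂) ∧
    (∀ g, MemWLp ν ω₂ p g → ∃ f, MemWLp μ ω₁ p f ∧ wCompOp c γ φ.symm f = g) ∧
    (∀ f g, MemWLp μ ω₁ p f → MemWLp μ ω₁ p g →
      wCompOp c γ φ.symm (wConv μ f g) =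
        wConv ν (wCompOp c γ φ.symm f) (wCompOp c γ φ.symm g)) := by
  have hp0 : 0 ≤ p := by linarith
  let e : G ≃ᵐ H :=
    ({ φ.toEquiv with continuous_toFun := hφ, continuous_invFun := hφ_inv } : G ≃ₜ H)
      |>.toMeasurableEquiv
  have hμ : μ = ENNReal.ofReal c • ν.map e.symm := eq_smul_map_symm_of_measure_image e hmeas
  have hν : ν = ENNReal.ofReal c⁻¹ • μ.map e := by
    rw [ENNReal.ofReal_inv_of_pos hc]
    exact eq_inv_smul_map_symm_of_eq_smul_map hμ (by simpa using hc) ofReal_ne_top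
  have hM : 0 < M := hm.trans_le ((hbound 1).1.trans (hbound 1).2)
  have he : (e : G → H) = φ := rfl
  have he_symm : (e.symm : H → G) = φ.symm := rfl
  have hupper : ∀ y, ‖γ (e.symm y)‖ * ω₂ y ≤ M * ω₁ (e.symm y) := fun y => by
    have := (div_le_iff₀ (hω₁_pos _)).mp (hbound (φ.symm y)).2
    rwa [φ.apply_symm_apply, ← he_symm] at this
  have hlower : ∀ x, ‖(γ (e.symm (e x)))⁻¹‖ * ω₁ x ≤ m⁻¹ * ω₂ (e x) := fun x => by
    rw [MeasurableEquiv.symm_apply_apply, norm_inv, he]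
    exact inv_mul_le_inv_mul_of_le_mul_div hm (norm_pos_iff.mpr (hγ_ne x)) (hω₁_pos x)
      (hbound x).1
  have hγm : Measurable γ := hγ_cont.measurable
  rw [← he_symm]
  refine ⟨fun f hf => hf.wCompOp hc hμ hp0 hM.le hγm hupper,
    ⟨(c * M) ^ p / c, by positivity, fun f _ => wLpNormPow_wCompOp_le hc hμ hp0 hM.le hupper f⟩,
    fun f₁ f₂ => (wCompOp_injective hc.ne' hγ_ne e.symm.surjective ·),
    fun g hg => ⟨_, hg.wCompOp (inv_pos.mpr hc) hν hp0 (inv_pos.mpr hm).le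
      (hγm.comp e.symm.measurable).inv hlower, wCompOp_wCompOp_inv hc.ne' hγ_ne e.symm.toEquiv g⟩,
    fun f g _ _ => wCompOp_wConv hγ_hom φ.symm.toMonoidHom
      (integral_eq_smul_integral_comp_of_eq_smul_map hc.le hμ) f g⟩

/-- Given a standard isomorphism `(γ, φ)` between weighted locally compact
groups `(G, ω₁)` and `(H, ω₂)` with measure adjustment constant `c`, the
weighted composition operator `T f = c · (γ ∘ φ⁻¹) · (f ∘ φ⁻¹)` is a bounded
bijective algebra homomorphism from `L^p(G, ω₁)` onto `L^p(H, ω₂)`. -/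
theorem stmt7 {G H : Type*}
    [Group G] [TopologicalSpace G] [IsTopologicalGroup G] [LocallyCompactSpace G]
    [MeasurableSpace G] [BorelSpace G]
    [Group H] [TopologicalSpace H] [IsTopologicalGroup H] [LocallyCompactSpace H]
    [MeasurableSpace H] [BorelSpace H]
    (μ : Measure G) [μ.IsHaarMeasure] (ν : Measure H) [ν.IsHaarMeasure]
    (ω₁ : G → ℝ) (hω₁_pos : ∀ x, 0 < ω₁ x) (hω₁_cont : Continuous ω₁)
    (hω₁_sub : ∀ x y, ω₁ (x * y) ≤ ω₁ x * ω₁ y) (hω₁_one : ω₁ 1 = 1)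
    (ω₂ : H → ℝ) (hω₂_pos : ∀ x, 0 < ω₂ x) (hω₂_cont : Continuous ω₂)
    (hω₂_sub : ∀ x y, ω₂ (x * y) ≤ ω₂ x * ω₂ y) (hω₂_one : ω₂ 1 = 1)
    (p : ℝ) (hp : 1 ≤ p)
    (halgG : ∀ f g, MemWLp μ ω₁ p f → MemWLp μ ω₁ p g →
      MemWLp μ ω₁ p (wConv μ f g))
    (halgH : ∀ f g, MemWLp ν ω₂ p f → MemWLp ν ω₂ p g →
      MemWLp ν ω₂ p (wConv ν f g))
    (φ : G ≃* H) (hφ : Continuous φ) (hφ_inv : Continuous φ.symm)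
    (c : ℝ) (hc : 0 < c)
    (hmeas : ∀ E : Set G, MeasurableSet E → μ E = ENNReal.ofReal c * ν (φ '' E))
    (γ : G → ℂ) (hγ_cont : Continuous γ) (hγ_ne : ∀ a, γ a ≠ 0)
    (hγ_hom : ∀ a b, γ (a * b) = γ a * γ b)
    (m M : ℝ) (hm : 0 < m)
    (hbound : ∀ a, m ≤ ‖γ a‖ * ω₂ (φ a) / ω₁ a ∧ ‖γ a‖ * ω₂ (φ a) / ω₁ a ≤ M) :
    (∀ f, MemWLp μ ω₁ p f → MemWLp ν ω₂ p (wCompOp c γ φ.symm f)) ∧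
    (∃ C : ℝ, 0 < C ∧ ∀ f, MemWLp μ ω₁ p f →
      ∫⁻ y, (‖wCompOp c γ φ.symm f y‖₊ : ℝ≥0∞) ^ p *
          ENNReal.ofReal (ω₂ y) ^ p ∂ν
        ≤ ENNReal.ofReal C *
          ∫⁻ x, (‖f x‖₊ : ℝ≥0∞) ^ p * ENNReal.ofReal (ω₁ x) ^ p ∂μ) ∧
    (∀ f₁ f₂ : G → ℂ, wCompOp c γ φ.symm f₁ = wCompOp c γ φ.symm f₂ → f₁ = f₂) ∧
    (∀ g, MemWLp ν ω₂ p g → ∃ f, MemWLp μ ω₁ p f ∧ wCompOp c γ φ.symm f = g) ∧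
    (∀ f g, MemWLp μ ω₁ p f → MemWLp μ ω₁ p g →
      wCompOp c γ φ.symm (wConv μ f g) =
        wConv ν (wCompOp c γ φ.symm f) (wCompOp c γ φ.symm g)) :=
  stmt7_general μ ν ω₁ hω₁_pos ω₂ p hp φ hφ hφ_inv c hc hmeas γ hγ_cont hγ_ne hγ_hom m M hm hbound
end

section
/- Let 1 ≤ p < ∞ and let T : L^p(μ) → L^p(ν) be a bijective bounded linear operator between L^p spaces of measure spaces such that both T and T⁻¹ are positive (map nonnegative functions to nonnegative functions). Then T preserves disjointness: if f · g = 0 a.e. then T(f) · T(g) = 0 a.e. -/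
open MeasureTheory ENNReal

/-!
A positive linear bijection whose inverse is positive reflects as well as preserves `≤`, so it is
an order isomorphism and therefore commutes with `⊔`, `⊓` and `|·| = · ⊔ -·`. In `L^p`, two
functions have a.e. vanishing product exactly when `|f| ⊓ |g| = 0`, a purely lattice-theoretic
condition, which such a map preserves.
-/

section Bipositive

variable {α β F : Type*} [AddCommGroup α] [Lattice α] [IsOrderedAddMonoid α]
  [AddCommGroup β] [Lattice β] [IsOrderedAddMonoid β] [FunLike F α β] [AddMonoidHomClass F α β]

theorem map_le_map_iff_of_bipositive {T : F} (hpos : ∀ a, 0 ≤ a → 0 ≤ T a)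
    (hpos_inv : ∀ a, 0 ≤ T a → 0 ≤ a) (a b : α) : T a ≤ T b ↔ a ≤ b := by
  rw [← sub_nonneg, ← map_sub, ← sub_nonneg (a := b)]
  exact ⟨hpos_inv _, hpos _⟩

noncomputable def orderIsoOfBipositive (T : F) (hsurj : Function.Surjective T)
    (hpos : ∀ a, 0 ≤ a → 0 ≤ T a) (hpos_inv : ∀ a, 0 ≤ T a → 0 ≤ a) : α ≃o β :=
  .ofSurjective (.ofMapLEIff T (map_le_map_iff_of_bipositive hpos hpos_inv)) hsurj

theorem map_abs_of_bipositive {T : F} (hsurj : Function.Surjective T)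
    (hpos : ∀ a, 0 ≤ a → 0 ≤ T a) (hpos_inv : ∀ a, 0 ≤ T a → 0 ≤ a) (a : α) :
    T |a| = |T a| := by
  have h : T (a ⊔ -a) = T a ⊔ T (-a) :=
    (orderIsoOfBipositive T hsurj hpos hpos_inv).map_sup a (-a)
  rwa [map_neg] at h

theorem map_inf_of_bipositive {T : F} (hsurj : Function.Surjective T)
    (hpos : ∀ a, 0 ≤ a → 0 ≤ T a) (hpos_inv : ∀ a, 0 ≤ T a → 0 ≤ a) (a b : α) :
    T (a ⊓ b) = T a ⊓ T b :=
  (orderIsoOfBipositive T hsurj hpos hpos_inv).map_inf a b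

theorem abs_inf_abs_eq_zero_of_bipositive {T : F} (hsurj : Function.Surjective T)
    (hpos : ∀ a, 0 ≤ a → 0 ≤ T a) (hpos_inv : ∀ a, 0 ≤ T a → 0 ≤ a) {a b : α}
    (hab : |a| ⊓ |b| = 0) : |T a| ⊓ |T b| = 0 := by
  rw [← map_abs_of_bipositive hsurj hpos hpos_inv, ← map_abs_of_bipositive hsurj hpos hpos_inv,
    ← map_inf_of_bipositive hsurj hpos hpos_inv, hab, map_zero]

end Bipositive

theorem mul_eq_zero_iff_abs_inf_abs_eq_zero {R : Type*} [Ring R] [LinearOrder R]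
    [IsStrictOrderedRing R] (x y : R) : x * y = 0 ↔ |x| ⊓ |y| = 0 := by
  rw [mul_eq_zero, ← abs_eq_zero, ← abs_eq_zero (a := y)]
  grind [abs_nonneg]

theorem MeasureTheory.Lp.mul_ae_eq_zero_iff_abs_inf_abs_eq_zero {X : Type*}
    [MeasurableSpace X] {μ : Measure X} {p : ℝ≥0∞} (f g : Lp ℝ p μ) :
    (fun x => f x * g x) =ᵐ[μ] 0 ↔ |f| ⊓ |g| = 0 := by
  rw [Lp.eq_zero_iff_ae_eq_zero]
  refine Filter.eventually_congr ?_
  filter_upwards [Lp.coeFn_inf |f| |g|, Lp.coeFn_abs f, Lp.coeFn_abs g] with x h hf hg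
  simp only [Pi.zero_apply, h, Pi.inf_apply, hf, hg, mul_eq_zero_iff_abs_inf_abs_eq_zero]

theorem stmt16_general {X Y : Type*} [MeasurableSpace X] [MeasurableSpace Y]
    (μ : Measure X) (ν : Measure Y)
    (p : ℝ≥0∞) [Fact (1 ≤ p)]
    (T : Lp ℝ p μ →L[ℝ] Lp ℝ p ν)
    (hbij : Function.Bijective T)
    (hpos : ∀ f : Lp ℝ p μ, 0 ≤ f → 0 ≤ T f)
    (hpos_inv : ∀ f : Lp ℝ p μ, 0 ≤ T f → 0 ≤ f)
    (f g : Lp ℝ p μ)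
    (hfg : (fun x => f x * g x) =ᵐ[μ] 0) :
    (fun y => T f y * T g y) =ᵐ[ν] 0 := by
  rw [Lp.mul_ae_eq_zero_iff_abs_inf_abs_eq_zero] at hfg ⊢
  exact abs_inf_abs_eq_zero_of_bipositive hbij.surjective hpos hpos_inv hfg

/-- A bipositive bounded bijective linear operator between `L^p` spaces of
σ-finite measure spaces preserves disjointness: if `f · g = 0` a.e. then
`T f · T g = 0` a.e. -/
theorem stmt16 {X Y : Type*} [MeasurableSpace X] [MeasurableSpace Y]
    (μ : Measure X) (ν : Measure Y) [SigmaFinite μ] [SigmaFinite ν]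
    (p : ℝ≥0∞) [Fact (1 ≤ p)] (hp' : p ≠ ⊤)
    (T : Lp ℝ p μ →L[ℝ] Lp ℝ p ν)
    (hbij : Function.Bijective T)
    (hpos : ∀ f : Lp ℝ p μ, 0 ≤ f → 0 ≤ T f)
    (hpos_inv : ∀ f : Lp ℝ p μ, 0 ≤ T f → 0 ≤ f)
    (f g : Lp ℝ p μ)
    (hfg : (fun x => f x * g x) =ᵐ[μ] 0) :
    (fun y => T f y * T g y) =ᵐ[ν] 0 :=
  stmt16_general μ ν p T hbij hpos hpos_inv f g hfg
end
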